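/- Let G be a graph, rs₁ ∈ E(G), and φ a proper edge Δ-coloring of G − rs₁ where Δ = Δ(G) and χ'(G) = Δ+1. If F = (r, rs₁, s₁, rs₂, s₂, …, rs_p, s_p) is a multifan with respect to rs₁ and φ, then the vertex set {r, s₁, …, s_p} is φ-elementary. -/

import Mathlib

/-!
If two vertices of the multifan missed a common color, `φ` could be turned into a proper
`Δ`-coloring of all of `G`, contradicting class 2. A color missing at `r` and at `s_i` is shifted
down the fan: recoloring `rs_i` by it makes the old color of `rs_i` missing at `r` and at an
earlier `s_j`, and at `s₁` it colors `rs₁`. A color `α` missing at two fan vertices is reduced to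
this case by a Kempe change with a color `β` missing at `r`: the `(α, β)`-chain through `r` is a
path ending at `r`, so it avoids one of the two fan vertices, and swapping the chain there makes
`β` missing at the first fan vertex of that chain missing `α`, leaving the fan below it intact.
-/

open SimpleGraph

/-- A proper edge `k`-coloring of `G` with colors in `[1, k]`. -/
def IsProperEdgeColoring {V : Type*} (G : SimpleGraph V) (k : ℕ) (c : Sym2 V → ℕ) : Prop :=
  (∀ e ∈ G.edgeSet, c e ∈ Finset.Icc 1 k) ∧
  ∀ e ∈ G.edgeSet, ∀ f ∈ G.edgeSet, e ≠ f → (∃ v : V, v ∈ e ∧ v ∈ f) → c e ≠ c f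

/-- `G` has a proper edge coloring with `k` colors. -/
def EdgeColorable {V : Type*} (G : SimpleGraph V) (k : ℕ) : Prop :=
  ∃ c : Sym2 V → ℕ, IsProperEdgeColoring G k c

/-- The set of colors of `[1, k]` missing at `v`. -/
def missingColors {V : Type*} (G : SimpleGraph V) (k : ℕ) (c : Sym2 V → ℕ) (v : V) : Set ℕ :=
  {α | α ∈ Finset.Icc 1 k ∧ ¬ ∃ e ∈ G.edgeSet, v ∈ e ∧ c e = α}

/-- The subgraph of `G` consisting of the edges colored `α` or `β`;
its components are the `(α, β)`-chains. -/
def chainGraph {V : Type*} (G : SimpleGraph V) (c : Sym2 V → ℕ) (α β : ℕ) : SimpleGraph V :=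
  SimpleGraph.fromEdgeSet {e ∈ G.edgeSet | c e = α ∨ c e = β}

section Coloring

variable {V : Type*} {G H : SimpleGraph V} {k : ℕ} {c : Sym2 V → ℕ} {α : ℕ}

lemma ne_of_mem_missingColors {v : V} {e : Sym2 V} (hα : α ∈ missingColors G k c v)
    (he : e ∈ G.edgeSet) (hv : v ∈ e) : c e ≠ α :=
  fun h => hα.2 ⟨e, he, hv, h⟩

lemma missingColors_congr {c' : Sym2 V → ℕ} {v : V}
    (h : ∀ e ∈ G.edgeSet, v ∈ e → c' e = c e) :
    missingColors G k c' v = missingColors G k c v := by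
  ext δ
  refine and_congr_right fun _ => not_congr ⟨?_, ?_⟩ <;> rintro ⟨e, he, hv, rfl⟩
  · exact ⟨e, he, hv, (h e he hv).symm⟩
  · exact ⟨e, he, hv, h e he hv⟩

lemma IsProperEdgeColoring.injOn_neighborSet (hc : IsProperEdgeColoring G k c) (v : V) :
    Set.InjOn (fun w => c s(v, w)) (G.neighborSet v) := by
  intro x hx y hy hxy
  by_contra hne
  exact hc.2 _ hx _ hy (fun h => hne (Sym2.congr_right.1 h))
    ⟨v, Sym2.mem_mk_left v x, Sym2.mem_mk_left v y⟩ hxy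

lemma exists_mem_missingColors [Finite V] {v : V} (h : (G.neighborSet v).ncard < k) :
    ∃ α, α ∈ missingColors G k c v := by
  have hlt : ((fun w => c s(v, w)) '' G.neighborSet v).ncard <
      (↑(Finset.Icc 1 k) : Set ℕ).ncard := by
    rw [Set.ncard_coe_finset, Nat.card_Icc, Nat.add_sub_cancel]
    exact (Set.ncard_image_le (Set.toFinite _)).trans_lt h
  obtain ⟨α, hα, hαS⟩ := Set.exists_mem_notMem_of_ncard_lt_ncard hlt
  refine ⟨α, hα, ?_⟩
  rintro ⟨e, he, hv, rfl⟩
  obtain ⟨w, rfl⟩ := Sym2.mem_iff_exists.1 hv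
  exact hαS ⟨w, he, rfl⟩

lemma IsProperEdgeColoring.update [DecidableEq V] (hc : IsProperEdgeColoring H k c) {a b : V}
    (hG : G.edgeSet ⊆ insert s(a, b) H.edgeSet)
    (ha : α ∈ missingColors H k c a) (hb : α ∈ missingColors H k c b) :
    IsProperEdgeColoring G k (Function.update c s(a, b) α) := by
  have hH : ∀ e ∈ G.edgeSet, e ≠ s(a, b) → e ∈ H.edgeSet := fun e he hne =>
    (hG he).resolve_left hne
  have hend : ∀ e ∈ G.edgeSet, e ≠ s(a, b) → ∀ v ∈ s(a, b), v ∈ e → c e ≠ α := by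
    intro e he hne v hv hve
    rcases Sym2.mem_iff.1 hv with rfl | rfl
    exacts [ne_of_mem_missingColors ha (hH e he hne) hve,
      ne_of_mem_missingColors hb (hH e he hne) hve]
  refine ⟨fun e he => ?_, fun e he e' he' hne ⟨v, hve, hve'⟩ => ?_⟩
  · rcases eq_or_ne e s(a, b) with rfl | h
    · simpa using ha.1
    · simpa [h] using hc.1 e (hH e he h)
  · rcases eq_or_ne e s(a, b) with rfl | h <;> rcases eq_or_ne e' s(a, b) with rfl | h'
    · exact absurd rfl hne
    · simpa [h'] using (hend e' he' h' v hve hve').symm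
    · simpa [h] using hend e he h v hve' hve
    · simpa [h, h'] using hc.2 e (hH e he h) e' (hH e' he' h') hne ⟨v, hve, hve'⟩

lemma edgeColorable_of_mem_missingColors_deleteEdges {a b : V}
    (hc : IsProperEdgeColoring (G.deleteEdges {s(a, b)}) k c)
    (ha : α ∈ missingColors (G.deleteEdges {s(a, b)}) k c a)
    (hb : α ∈ missingColors (G.deleteEdges {s(a, b)}) k c b) : EdgeColorable G k := by
  classical
  exact ⟨_, hc.update (by simp [edgeSet_deleteEdges]) ha hb⟩

lemma missingColors_update_of_notMem [DecidableEq V] {e : Sym2 V} {v : V} (hv : v ∉ e) :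
    missingColors G k (Function.update c e α) v = missingColors G k c v :=
  missingColors_congr fun e' _ hve' => Function.update_of_ne (fun h : e' = e => hv (h ▸ hve')) _ _

lemma IsProperEdgeColoring.mem_missingColors_update [DecidableEq V]
    (hc : IsProperEdgeColoring G k c) {a b : V}
    (he : s(a, b) ∈ G.edgeSet) (hα : α ∈ missingColors G k c a) :
    c s(a, b) ∈ missingColors G k (Function.update c s(a, b) α) a := by
  refine ⟨hc.1 _ he, ?_⟩
  rintro ⟨e, he', ha, hce⟩
  rcases eq_or_ne e s(a, b) with rfl | hne
  · simp only [Function.update_self] at hce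
    exact ne_of_mem_missingColors hα he (Sym2.mem_mk_left a b) hce.symm
  · rw [Function.update_of_ne hne] at hce
    exact hc.2 e he' _ he hne ⟨a, ha, Sym2.mem_mk_left a b⟩ hce

end Coloring

section Kempe

variable {V : Type*} {G : SimpleGraph V} {k : ℕ} {c : Sym2 V → ℕ} {α β : ℕ}

lemma chainGraph_adj {v w : V} :
    (chainGraph G c α β).Adj v w ↔ G.Adj v w ∧ (c s(v, w) = α ∨ c s(v, w) = β) := by
  simp only [chainGraph, fromEdgeSet_adj, Set.mem_ofPred_eq, mem_edgeSet]
  exact ⟨fun h => h.1, fun h => ⟨h, h.1.ne⟩⟩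

lemma chainGraph_comm : chainGraph G c α β = chainGraph G c β α := by
  simp only [chainGraph, or_comm]

lemma IsProperEdgeColoring.ncard_neighborSet_chainGraph_le_two
    (hc : IsProperEdgeColoring G k c) (v : V) :
    ((chainGraph G c α β).neighborSet v).ncard ≤ 2 := by
  have hmaps : ∀ w ∈ (chainGraph G c α β).neighborSet v, c s(v, w) ∈ ({α, β} : Set ℕ) :=
    fun w hw => (chainGraph_adj.1 hw).2
  refine (Set.ncard_le_ncard_of_injOn _ hmaps ((hc.injOn_neighborSet v).mono
    fun w hw => (chainGraph_adj.1 hw).1) (Set.toFinite _)).trans ?_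
  exact (Set.ncard_insert_le _ _).trans (by rw [Set.ncard_singleton])

lemma IsProperEdgeColoring.ncard_neighborSet_chainGraph_le_one
    (hc : IsProperEdgeColoring G k c) {v : V} (hα : α ∈ missingColors G k c v) :
    ((chainGraph G c α β).neighborSet v).ncard ≤ 1 := by
  have hmaps : ∀ w ∈ (chainGraph G c α β).neighborSet v, c s(v, w) ∈ ({β} : Set ℕ) := by
    intro w hw
    obtain ⟨hadj, hcol⟩ := chainGraph_adj.1 hw
    exact hcol.resolve_left (ne_of_mem_missingColors hα hadj (Sym2.mem_mk_left v w))
  refine (Set.ncard_le_ncard_of_injOn _ hmaps ((hc.injOn_neighborSet v).mono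
    fun w hw => (chainGraph_adj.1 hw).1) (Set.toFinite _)).trans ?_
  rw [Set.ncard_singleton]

open Classical in
/-- The Kempe change on the `(α, β)`-chain through `x`. Swapping the colors of every edge touching
the chain is harmless: such an edge lies in the chain or has a color other than `α`, `β`. -/
noncomputable def kempeChange (G : SimpleGraph V) (c : Sym2 V → ℕ) (α β : ℕ) (x : V) :
    Sym2 V → ℕ :=
  fun e => if ∃ v ∈ e, (chainGraph G c α β).Reachable x v then Equiv.swap α β (c e) else c e

variable {x : V}

lemma kempeChange_of_reachable {v : V} {e : Sym2 V} (hv : (chainGraph G c α β).Reachable x v)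
    (hve : v ∈ e) : kempeChange G c α β x e = Equiv.swap α β (c e) :=
  if_pos ⟨v, hve, hv⟩

lemma kempeChange_of_not_reachable {v : V} {e : Sym2 V} (he : e ∈ G.edgeSet)
    (hv : ¬ (chainGraph G c α β).Reachable x v) (hve : v ∈ e) :
    kempeChange G c α β x e = c e := by
  unfold kempeChange
  split_ifs with h
  · obtain ⟨w, hwe, hw⟩ := h
    obtain ⟨u, rfl⟩ := Sym2.mem_iff_exists.1 hve
    have hcol : ¬ (c s(v, u) = α ∨ c s(v, u) = β) := by
      intro hcol
      have hadj : (chainGraph G c α β).Adj v u := chainGraph_adj.2 ⟨he, hcol⟩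
      rcases Sym2.mem_iff.1 hwe with rfl | rfl
      exacts [hv hw, hv (hw.trans hadj.symm.reachable)]
    obtain ⟨hα, hβ⟩ := not_or.1 hcol
    exact Equiv.swap_apply_of_ne_of_ne hα hβ
  · rfl

lemma swap_mem_Icc_iff {k α β δ : ℕ} (hα : α ∈ Finset.Icc 1 k) (hβ : β ∈ Finset.Icc 1 k) :
    Equiv.swap α β δ ∈ Finset.Icc 1 k ↔ δ ∈ Finset.Icc 1 k := by
  rw [Equiv.swap_apply_def]
  split_ifs with h1 h2 <;> simp_all

lemma IsProperEdgeColoring.kempeChange (hc : IsProperEdgeColoring G k c)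
    (hα : α ∈ Finset.Icc 1 k) (hβ : β ∈ Finset.Icc 1 k) (x : V) :
    IsProperEdgeColoring G k (kempeChange G c α β x) := by
  refine ⟨fun e he => ?_, fun e he e' he' hne ⟨v, hve, hve'⟩ => ?_⟩
  · unfold _root_.kempeChange
    split_ifs
    exacts [(swap_mem_Icc_iff hα hβ).2 (hc.1 e he), hc.1 e he]
  · have hcc := hc.2 e he e' he' hne ⟨v, hve, hve'⟩
    by_cases hv : (chainGraph G c α β).Reachable x v
    · rw [kempeChange_of_reachable hv hve, kempeChange_of_reachable hv hve']
      exact (Equiv.injective _).ne hcc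
    · rwa [kempeChange_of_not_reachable he hv hve, kempeChange_of_not_reachable he' hv hve']

lemma mem_missingColors_kempeChange_of_reachable {v : V} {δ : ℕ}
    (hα : α ∈ Finset.Icc 1 k) (hβ : β ∈ Finset.Icc 1 k)
    (hv : (chainGraph G c α β).Reachable x v) :
    δ ∈ missingColors G k (kempeChange G c α β x) v ↔
      Equiv.swap α β δ ∈ missingColors G k c v := by
  unfold missingColors
  simp only [Set.mem_ofPred_eq, swap_mem_Icc_iff hα hβ]
  refine and_congr_right fun _ => not_congr (exists_congr fun e => and_congr_right fun _ =>
    and_congr_right fun hve => ?_)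
  rw [kempeChange_of_reachable hv hve, Equiv.swap_apply_eq_iff]

lemma missingColors_kempeChange_of_not_reachable {v : V}
    (hv : ¬ (chainGraph G c α β).Reachable x v) :
    missingColors G k (kempeChange G c α β x) v = missingColors G k c v :=
  missingColors_congr fun _ he hve => kempeChange_of_not_reachable he hv hve

end Kempe

section Components

variable {W : Type*}

lemma SimpleGraph.Connected.ncard_setOf_ncard_neighborSet_le_one_le_two [Finite W]
    {D : SimpleGraph W} (hD : D.Connected) (h2 : ∀ v, (D.neighborSet v).ncard ≤ 2) :
    {v | (D.neighborSet v).ncard ≤ 1}.ncard ≤ 2 := by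
  classical
  have := Fintype.ofFinite W
  have hdeg : ∀ v, (D.neighborSet v).ncard = D.degree v := fun v => by
    rw [← Nat.card_coe_set_eq, Nat.card_eq_fintype_card, card_neighborSet_eq_degree]
  simp only [hdeg] at h2 ⊢
  rw [Set.ncard_eq_toFinset_card', Set.toFinset_ofPred]
  have hsum := D.sum_degrees_eq_twice_card_edges
  have hedges := hD.card_vert_le_card_edgeSet_add_one
  rw [Nat.card_eq_fintype_card, Nat.card_eq_fintype_card, ← edgeFinset_card] at hedges
  have hT : ∑ v ∈ Finset.univ.filter (fun v => D.degree v ≤ 1), D.degree v ≤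
      (Finset.univ.filter fun v => D.degree v ≤ 1).card := by
    simpa using Finset.sum_le_card_nsmul _ (fun v => D.degree v) 1
      fun v hv => (Finset.mem_filter.1 hv).2
  have hTc : ∑ v ∈ Finset.univ.filter (fun v => ¬ D.degree v ≤ 1), D.degree v ≤
      (Finset.univ.filter fun v => ¬ D.degree v ≤ 1).card * 2 := by
    simpa using Finset.sum_le_card_nsmul _ _ 2 fun v _ => h2 v
  rw [← Finset.sum_filter_add_sum_filter_not Finset.univ fun v => D.degree v ≤ 1] at hsum
  have hcard := Finset.card_filter_add_card_filter_not (s := Finset.univ) fun v => D.degree v ≤ 1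
  rw [Finset.card_univ] at hcard
  omega

lemma ncard_reachable_ncard_neighborSet_le_one_le_two [Finite W] {H : SimpleGraph W}
    (h2 : ∀ v, (H.neighborSet v).ncard ≤ 2) (x : W) :
    {v | H.Reachable x v ∧ (H.neighborSet v).ncard ≤ 1}.ncard ≤ 2 := by
  set C := H.connectedComponentMk x
  have hmem : ∀ {v}, v ∈ C ↔ H.Reachable x v := fun {v} =>
    (C.mem_supp_iff v).trans (ConnectedComponent.eq.trans reachable_comm)
  have hdeg : ∀ u : C, (C.toSimpleGraph.neighborSet u).ncard = (H.neighborSet u).ncard := by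
    rintro ⟨u, hu⟩
    rw [← Set.ncard_image_of_injective _ Subtype.val_injective]
    congr 1
    ext w
    refine ⟨?_, fun hw => ⟨⟨w, C.mem_supp_of_adj_mem_supp hu hw⟩, hw, rfl⟩⟩
    rintro ⟨w, hw, rfl⟩
    exact hw
  have hset : {v | H.Reachable x v ∧ (H.neighborSet v).ncard ≤ 1} =
      Subtype.val '' {u : C | (C.toSimpleGraph.neighborSet u).ncard ≤ 1} := by
    ext v
    simp only [Set.mem_ofPred_eq, Set.mem_image, hdeg, Subtype.exists, exists_and_right,
      exists_eq_right, exists_prop, ← hmem]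
  rw [hset, Set.ncard_image_of_injective _ Subtype.val_injective]
  exact C.connected_toSimpleGraph.ncard_setOf_ncard_neighborSet_le_one_le_two
    fun u => (hdeg u).trans_le (h2 u)

end Components

lemma ncard_neighborSet_deleteEdges_lt_maxDegree {V : Type*} [Fintype V] {G : SimpleGraph V}
    [DecidableRel G.Adj] {r s : V} (h : G.Adj r s) :
    ((G.deleteEdges {s(r, s)}).neighborSet r).ncard < G.maxDegree := by
  have hsub : (G.deleteEdges {s(r, s)}).neighborSet r ⊂ G.neighborSet r := by
    exact (Set.ssubset_iff_of_subset fun w hw => (deleteEdges_adj.1 hw).1).2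
      ⟨s, h, fun hs => (deleteEdges_adj.1 hs).2 (Set.mem_singleton _)⟩
  calc _ < (G.neighborSet r).ncard := Set.ncard_lt_ncard hsub
    _ = G.degree r := by
      rw [← Nat.card_coe_set_eq, Nat.card_eq_fintype_card, card_neighborSet_eq_degree]
    _ ≤ G.maxDegree := G.degree_le_maxDegree r

section Multifan

variable {V : Type*} {G : SimpleGraph V} {k p : ℕ}

/-- Indices start at zero: `f i` is the paper's `s_{i+1}`. -/
def IsMultifanUpTo (H : SimpleGraph V) (k : ℕ) (c : Sym2 V → ℕ) (r : V) (f : Fin p → V)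
    (n : ℕ) : Prop :=
  ∀ i : Fin p, 0 < (i : ℕ) → (i : ℕ) ≤ n →
    ∃ j : Fin p, (j : ℕ) < i ∧ c s(r, f i) ∈ missingColors H k c (f j)

variable {r : V} {f : Fin p → V} {hp : 0 < p} {c : Sym2 V → ℕ} {α β : ℕ}

local notation "G'" => SimpleGraph.deleteEdges G {s(r, f (Fin.mk 0 hp))}

lemma injective_edge_center (hinj : Function.Injective f) :
    Function.Injective fun i => s(r, f i) :=
  fun _ _ h => hinj (Sym2.congr_right.1 h)

lemma edge_mem_deleteEdges (hinj : Function.Injective f) (hadj : ∀ i, G.Adj r (f i)) {i : Fin p}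
    (hi : 0 < (i : ℕ)) : s(r, f i) ∈ (G').edgeSet := by
  rw [edgeSet_deleteEdges]
  exact ⟨hadj i, fun h => hi.ne' (congrArg Fin.val (injective_edge_center hinj h))⟩

lemma notMem_edge_center (hinj : Function.Injective f) (hr : ∀ i, f i ≠ r) {i j : Fin p}
    (hji : j ≠ i) : f j ∉ s(r, f i) := by
  rw [Sym2.mem_iff, not_or]
  exact ⟨hr j, hinj.ne hji⟩

theorem IsMultifanUpTo.edgeColorable_of_center (hinj : Function.Injective f)
    (hr : ∀ i, f i ≠ r) (hadj : ∀ i, G.Adj r (f i)) {i : Fin p}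
    (hfan : IsMultifanUpTo G' k c r f i) (hc : IsProperEdgeColoring G' k c)
    (hαr : α ∈ missingColors G' k c r) (hαi : α ∈ missingColors G' k c (f i)) :
    EdgeColorable G k := by
  classical
  induction i using WellFoundedLT.induction generalizing c α with
  | _ i ih =>
    rcases Nat.eq_zero_or_pos i with hi | hi
    · obtain rfl : i = ⟨0, hp⟩ := Fin.ext hi
      exact edgeColorable_of_mem_missingColors_deleteEdges hc hαr hαi
    -- Shift: recolor `r (f i)` by `α`; its old color is then missing at `r` and at `f j`, `j < i`.
    obtain ⟨j, hji, hγj⟩ := hfan i hi le_rfl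
    have hedge := edge_mem_deleteEdges (hp := hp) hinj hadj hi
    refine ih j hji (c := Function.update c s(r, f i) α) ?_
      (hc.update (Set.subset_insert _ _) hαr hαi) (hc.mem_missingColors_update hedge hαr) ?_
    · intro a ha haj
      have hai : a < i := haj.trans_lt hji
      obtain ⟨b, hba, hb⟩ := hfan a ha (haj.trans hji.le)
      refine ⟨b, hba, ?_⟩
      rwa [Function.update_of_ne ((injective_edge_center hinj).ne (Fin.ne_of_lt hai)),
        missingColors_update_of_notMem (notMem_edge_center hinj hr (Fin.ne_of_lt (hba.trans hai)))]
    · rwa [missingColors_update_of_notMem (notMem_edge_center hinj hr (Fin.ne_of_lt hji))]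

theorem IsMultifanUpTo.edgeColorable_of_not_reachable (hinj : Function.Injective f)
    (hr : ∀ i, f i ≠ r) (hadj : ∀ i, G.Adj r (f i)) {i : Fin p}
    (hfan : IsMultifanUpTo G' k c r f i) (hc : IsProperEdgeColoring G' k c)
    (hβr : β ∈ missingColors G' k c r) (hαi : α ∈ missingColors G' k c (f i))
    (hri : ¬ (chainGraph G' c α β).Reachable (f i) r) : EdgeColorable G k := by
  -- After the Kempe change at `f i`, `β` is missing at `r` and at the first fan vertex `f x` of
  -- the chain missing `α`; the fan below `x` survives, as its colors avoid `α` and `β`.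
  obtain ⟨x, ⟨hxR, hαx⟩, hmin⟩ := wellFounded_lt.has_min
    {x : Fin p | (chainGraph G' c α β).Reachable (f i) (f x) ∧ α ∈ missingColors G' k c (f x)}
    ⟨i, Reachable.refl _, hαi⟩
  have hxi : x ≤ i := not_lt.1 (hmin i ⟨Reachable.refl _, hαi⟩)
  refine IsMultifanUpTo.edgeColorable_of_center hinj hr hadj (i := x) ?_
    (hc.kempeChange hαi.1 hβr.1 (f i)) (α := β) ?_ ?_
  · intro a ha hax
    obtain ⟨j, hja, hj⟩ := hfan a ha (hax.trans hxi)
    refine ⟨j, hja, ?_⟩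
    have hedge := edge_mem_deleteEdges (hp := hp) hinj hadj ha
    rw [kempeChange_of_not_reachable hedge hri (Sym2.mem_mk_left _ _)]
    by_cases hjR : (chainGraph G' c α β).Reachable (f i) (f j)
    · have hγα : c s(r, f a) ≠ α := fun h => hmin j ⟨hjR, h ▸ hj⟩ (hja.trans_le hax)
      have hγβ : c s(r, f a) ≠ β := ne_of_mem_missingColors hβr hedge (Sym2.mem_mk_left _ _)
      rwa [mem_missingColors_kempeChange_of_reachable hαi.1 hβr.1 hjR,
        Equiv.swap_apply_of_ne_of_ne hγα hγβ]
    · rwa [missingColors_kempeChange_of_not_reachable hjR]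
  · rwa [missingColors_kempeChange_of_not_reachable hri]
  · rwa [mem_missingColors_kempeChange_of_reachable hαi.1 hβr.1 hxR, Equiv.swap_apply_right]

theorem edgeColorable_of_mem_missingColors_fan [Finite V] (hinj : Function.Injective f)
    (hr : ∀ i, f i ≠ r) (hadj : ∀ i, G.Adj r (f i)) {i j : Fin p} (hij : i ≠ j)
    (hfi : IsMultifanUpTo G' k c r f i) (hfj : IsMultifanUpTo G' k c r f j)
    (hc : IsProperEdgeColoring G' k c) (hk : ((G').neighborSet r).ncard < k)
    (hαi : α ∈ missingColors G' k c (f i)) (hαj : α ∈ missingColors G' k c (f j)) :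
    EdgeColorable G k := by
  obtain ⟨β, hβr⟩ := exists_mem_missingColors (c := c) hk
  by_cases hri : (chainGraph G' c α β).Reachable (f i) r
  swap
  · exact hfi.edgeColorable_of_not_reachable hinj hr hadj hc hβr hαi hri
  by_cases hrj : (chainGraph G' c α β).Reachable (f j) r
  swap
  · exact hfj.edgeColorable_of_not_reachable hinj hr hadj hc hβr hαj hrj
  -- Otherwise `r`, `f i`, `f j` would be three ends of the `(α, β)`-path through `r`.
  refine absurd (ncard_reachable_ncard_neighborSet_le_one_le_two
    hc.ncard_neighborSet_chainGraph_le_two r) (not_le.2 ((Set.two_lt_ncard (Set.toFinite _)).2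
      ⟨r, ⟨Reachable.refl _, ?_⟩, f i, ⟨hri.symm, hc.ncard_neighborSet_chainGraph_le_one hαi⟩,
        f j, ⟨hrj.symm, hc.ncard_neighborSet_chainGraph_le_one hαj⟩,
        (hr i).symm, (hr j).symm, hinj.ne hij⟩))
  rw [chainGraph_comm]
  exact hc.ncard_neighborSet_chainGraph_le_one hβr

end Multifan

open Classical in
theorem stmt_15_general {V : Type*} [Fintype V] (G : SimpleGraph V)
    (hclass2b : ¬ EdgeColorable G G.maxDegree)
    (r : V) (p : ℕ) (hp : 0 < p) (f : Fin p → V)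
    (hinj : Function.Injective f) (hr : ∀ i, f i ≠ r)
    (hadj : ∀ i, G.Adj r (f i))
    (c : Sym2 V → ℕ)
    (hc : IsProperEdgeColoring (G.deleteEdges {Sym2.mk r (f ⟨0, hp⟩)}) G.maxDegree c)
    (hfan : ∀ i : Fin p, 0 < (i : ℕ) → ∃ j : Fin p, (j : ℕ) < (i : ℕ) ∧
      c (Sym2.mk r (f i)) ∈
        missingColors (G.deleteEdges {Sym2.mk r (f ⟨0, hp⟩)}) G.maxDegree c (f j)) :
    ∀ u ∈ insert r (Set.range f), ∀ v ∈ insert r (Set.range f), u ≠ v →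
      missingColors (G.deleteEdges {Sym2.mk r (f ⟨0, hp⟩)}) G.maxDegree c u ∩
        missingColors (G.deleteEdges {Sym2.mk r (f ⟨0, hp⟩)}) G.maxDegree c v = ∅ := by
  intro u hu v hv huv
  by_contra hne
  obtain ⟨α, hαu, hαv⟩ := Set.nonempty_iff_ne_empty.2 hne
  have hmultifan : ∀ n, IsMultifanUpTo (G.deleteEdges {s(r, f ⟨0, hp⟩)}) G.maxDegree c r f n :=
    fun n i hi _ => hfan i hi
  rcases hu with rfl | ⟨i, rfl⟩ <;> rcases hv with rfl | ⟨j, rfl⟩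
  · exact huv rfl
  · exact hclass2b ((hmultifan j).edgeColorable_of_center hinj hr hadj hc hαu hαv)
  · exact hclass2b ((hmultifan i).edgeColorable_of_center hinj hr hadj hc hαv hαu)
  · exact hclass2b (edgeColorable_of_mem_missingColors_fan hinj hr hadj (ne_of_apply_ne f huv)
      (hmultifan i) (hmultifan j) hc (ncard_neighborSet_deleteEdges_lt_maxDegree (hadj _))
      hαu hαv)

open Classical in
theorem stmt_15 {V : Type*} [Fintype V] (G : SimpleGraph V)
    (hclass2a : EdgeColorable G (G.maxDegree + 1))
    (hclass2b : ¬ EdgeColorable G G.maxDegree)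
    (r : V) (p : ℕ) (hp : 0 < p) (f : Fin p → V)
    (hinj : Function.Injective f) (hr : ∀ i, f i ≠ r)
    (hadj : ∀ i, G.Adj r (f i))
    (c : Sym2 V → ℕ)
    (hc : IsProperEdgeColoring (G.deleteEdges {Sym2.mk r (f ⟨0, hp⟩)}) G.maxDegree c)
    (hfan : ∀ i : Fin p, 0 < (i : ℕ) → ∃ j : Fin p, (j : ℕ) < (i : ℕ) ∧
      c (Sym2.mk r (f i)) ∈
        missingColors (G.deleteEdges {Sym2.mk r (f ⟨0, hp⟩)}) G.maxDegree c (f j)) :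
    ∀ u ∈ insert r (Set.range f), ∀ v ∈ insert r (Set.range f), u ≠ v →
      missingColors (G.deleteEdges {Sym2.mk r (f ⟨0, hp⟩)}) G.maxDegree c u ∩
        missingColors (G.deleteEdges {Sym2.mk r (f ⟨0, hp⟩)}) G.maxDegree c v = ∅ :=
  stmt_15_general G hclass2b r p hp f hinj hr hadj c hc hfan
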